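/- For each i ∈ {1,…,n}, the function φ₁ⁱ(x) := xᵢ/(1−|x|²) satisfies Δ_H φ₁ⁱ − n φ₁ⁱ = 0 at every point of the open unit ball B₁ ⊂ ℝⁿ, and for every 0 < R < 1 it satisfies the Steklov boundary condition ∂_{ν_H} φ₁ⁱ = ((1+R²)/(2R)) φ₁ⁱ at every point of the sphere ∂B_R; i.e., φ₁ⁱ is an eigenfunction with boundary eigenvalue μ₁ = (1+R²)/(2R). -/

import Mathlib

noncomputable section

open Real

/-- Partial derivative `∂ᵢ` of a function on `ℝⁿ`. -/
def pd {n : ℕ} (i : Fin n) (f : (Fin n → ℝ) → ℝ) (x : Fin n → ℝ) : ℝ :=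
  fderiv ℝ f x (Pi.single i 1)

/-- Euclidean Laplacian on `ℝⁿ`. -/
def lapF {n : ℕ} (f : (Fin n → ℝ) → ℝ) (x : Fin n → ℝ) : ℝ :=
  ∑ i, pd i (pd i f) x

/-- Squared Euclidean norm `|x|²`. -/
def nsq {n : ℕ} (x : Fin n → ℝ) : ℝ := ∑ i, (x i) ^ 2

/-- The Laplace–Beltrami operator of the Poincaré metric
`g_H = 4|dx|²/(1-|x|²)²` on the unit ball:
`Δ_H v = ((1-|x|²)²/4) Δv + ((n-2)(1-|x|²)/2) x·∇v`. -/
def hypLap (n : ℕ) (v : (Fin n → ℝ) → ℝ) (x : Fin n → ℝ) : ℝ :=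
  ((1 - nsq x) ^ 2 / 4) * lapF v x +
    (((n : ℝ) - 2) * (1 - nsq x) / 2) * ∑ i, x i * pd i v x

/-- The outward hyperbolic normal derivative on the sphere `∂B_R`:
`∂_{ν_H} v = ((1-|x|²)/2) (x/R)·∇v`. -/
def hypNormalDeriv (n : ℕ) (R : ℝ) (v : (Fin n → ℝ) → ℝ) (x : Fin n → ℝ) : ℝ :=
  ((1 - nsq x) / 2) * ∑ i, (x i / R) * pd i v x

/-! Write `φ₁ⁱ(x) = xᵢ f(|x|²)` with `f t = (1 - t)⁻¹`. For any such "linear times radial"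
function the product and chain rules give `∂ⱼφ = δᵢⱼ f + 2 xᵢ xⱼ f'`, hence
`x·∇φ = xᵢ (f + 2|x|² f')` and `Δφ = xᵢ (2(n+2) f' + 4|x|² f'')`. With `f' = (1-t)⁻²`,
`f'' = 2(1-t)⁻³` both identities reduce to rational-function algebra in `|x|²`. -/

open Filter Topology

section PartialDerivatives

variable {n : ℕ} {f g : (Fin n → ℝ) → ℝ} {x : Fin n → ℝ} (j : Fin n)

lemma pd_congr_of_eventuallyEq (h : f =ᶠ[𝓝 x] g) : pd j f x = pd j g x := by
  rw [pd, pd, h.fderiv_eq]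

lemma pd_add (hf : DifferentiableAt ℝ f x) (hg : DifferentiableAt ℝ g x) :
    pd j (fun y => f y + g y) x = pd j f x + pd j g x := by
  simp [pd, fderiv_fun_add hf hg]

lemma pd_mul (hf : DifferentiableAt ℝ f x) (hg : DifferentiableAt ℝ g x) :
    pd j (fun y => f y * g y) x = pd j f x * g x + f x * pd j g x := by
  simp [pd, fderiv_fun_mul hf hg]
  ring

lemma pd_const_mul (hf : DifferentiableAt ℝ f x) (c : ℝ) :
    pd j (fun y => c * f y) x = c * pd j f x := by
  simp [pd, fderiv_const_mul hf]

lemma pd_comp {h : ℝ → ℝ} {h' : ℝ} (hh : HasDerivAt h h' (f x)) (hf : DifferentiableAt ℝ f x) :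
    pd j (fun y => h (f y)) x = h' * pd j f x := by
  have hc : HasFDerivAt (fun y => h (f y)) (h' • fderiv ℝ f x) x :=
    hh.comp_hasFDerivAt x hf.hasFDerivAt
  simp [pd, hc.fderiv]

lemma pd_apply (i : Fin n) : pd j (fun y => y i) x = if i = j then 1 else 0 := by
  rw [pd, (hasFDerivAt_apply i x).fderiv]
  simp [Pi.single_apply]

@[fun_prop]
lemma differentiable_nsq : Differentiable ℝ (nsq : (Fin n → ℝ) → ℝ) := by
  unfold nsq; fun_prop

lemma pd_nsq : pd j nsq x = 2 * x j := by
  have h : ∀ i ∈ Finset.univ, HasFDerivAt (fun y : Fin n → ℝ => y i ^ 2)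
      ((2 * x i) • ContinuousLinearMap.proj i) x := fun i _ => by
    simpa using (hasFDerivAt_apply (𝕜 := ℝ) i x).pow 2
  rw [pd, show nsq = fun y : Fin n → ℝ => ∑ i, y i ^ 2 from rfl, (HasFDerivAt.fun_sum h).fderiv]
  simp [Pi.single_apply]

end PartialDerivatives

section LinearTimesRadial

variable {n : ℕ} {f f' : ℝ → ℝ} {x : Fin n → ℝ} {c c' : ℝ} (i j : Fin n)

lemma pd_mul_comp_nsq (hf : HasDerivAt f c (nsq x)) :
    pd j (fun y => y i * f (nsq y)) x =
      (if i = j then 1 else 0) * f (nsq x) + 2 * x i * x j * c := by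
  have hfd := hf.differentiableAt
  rw [pd_mul j (by fun_prop) (by fun_prop), pd_apply, pd_comp j hf (by fun_prop), pd_nsq]
  ring

lemma sum_mul_pd_mul_comp_nsq (hf : HasDerivAt f c (nsq x)) :
    ∑ j, x j * pd j (fun y => y i * f (nsq y)) x = x i * (f (nsq x) + 2 * nsq x * c) := by
  have hsq : ∑ j, x j * (2 * x i * x j * c) = 2 * x i * nsq x * c := by
    simp only [nsq, Finset.mul_sum, Finset.sum_mul]
    exact Finset.sum_congr rfl fun j _ => by ring
  simp only [pd_mul_comp_nsq i _ hf, mul_add, Finset.sum_add_distrib, hsq]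
  simp only [ite_mul, one_mul, zero_mul, mul_ite, mul_zero, Finset.sum_ite_eq, Finset.mem_univ,
    ↓reduceIte, add_right_inj]
  ring

lemma pd_pd_mul_comp_nsq (hf : ∀ᶠ t in 𝓝 (nsq x), HasDerivAt f (f' t) t)
    (hf' : HasDerivAt f' c' (nsq x)) :
    pd j (pd j (fun y => y i * f (nsq y))) x =
      (if i = j then 4 * x i * f' (nsq x) else 0) + 2 * x i * f' (nsq x) +
        4 * x i * x j ^ 2 * c' := by
  have hG : pd j (fun y => y i * f (nsq y)) =ᶠ[𝓝 x]
      fun y => (if i = j then 1 else 0) * f (nsq y) + 2 * y i * y j * f' (nsq y) := by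
    filter_upwards [(differentiable_nsq x).continuousAt.tendsto.eventually hf] with y hy
    exact pd_mul_comp_nsq i j hy
  have hfd := hf.self_of_nhds.differentiableAt
  have hf'd := hf'.differentiableAt
  rw [pd_congr_of_eventuallyEq j hG, pd_add j (by fun_prop) (by fun_prop),
    pd_const_mul j (by fun_prop), pd_comp j hf.self_of_nhds (by fun_prop),
    pd_mul j (by fun_prop) (by fun_prop), pd_mul j (by fun_prop) (by fun_prop),
    pd_const_mul j (by fun_prop), pd_comp j hf' (by fun_prop), pd_apply, pd_apply, pd_nsq]
  obtain rfl | h := eq_or_ne i j <;> simp [*] <;> ring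

lemma lapF_mul_comp_nsq (hf : ∀ᶠ t in 𝓝 (nsq x), HasDerivAt f (f' t) t)
    (hf' : HasDerivAt f' c' (nsq x)) :
    lapF (fun y => y i * f (nsq y)) x = x i * (2 * (n + 2) * f' (nsq x) + 4 * nsq x * c') := by
  have hsq : ∑ j, 4 * x i * x j ^ 2 * c' = 4 * x i * nsq x * c' := by
    simp only [nsq, Finset.mul_sum, Finset.sum_mul]
  simp only [lapF, pd_pd_mul_comp_nsq i _ hf hf', Finset.sum_add_distrib, hsq]
  simp only [Finset.sum_ite_eq, Finset.mem_univ, ↓reduceIte, Finset.sum_const, Finset.card_univ,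
    Fintype.card_fin, nsmul_eq_mul]
  ring

end LinearTimesRadial

lemma hasDerivAt_inv_one_sub_pow {t : ℝ} (m : ℕ) (ht : t ≠ 1) :
    HasDerivAt (fun t => ((1 - t) ^ m)⁻¹) (m * ((1 - t) ^ (m + 1))⁻¹) t := by
  have h1 : 1 - t ≠ 0 := sub_ne_zero.mpr ht.symm
  refine ((((hasDerivAt_id' t).const_sub 1).fun_pow m).fun_inv (pow_ne_zero m h1)).congr_deriv ?_
  rcases m with _ | k
  · simp
  · rw [Nat.add_sub_cancel]
    field_simp
    ring

theorem stmt_11_general (n : ℕ) (i : Fin n)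
    (φ₁ : (Fin n → ℝ) → ℝ) (hφ₁ : φ₁ = fun x => x i / (1 - nsq x)) :
    (∀ x : Fin n → ℝ, nsq x < 1 → hypLap n φ₁ x - (n : ℝ) * φ₁ x = 0) ∧
    (∀ R : ℝ, 0 < R → R < 1 → ∀ x : Fin n → ℝ, nsq x = R ^ 2 →
      hypNormalDeriv n R φ₁ x = ((1 + R ^ 2) / (2 * R)) * φ₁ x) := by
  have hφ : φ₁ = fun y => y i * (fun t => (1 - t)⁻¹) (nsq y) := by
    simp only [hφ₁, div_eq_mul_inv]
  have hf {t : ℝ} (ht : t ≠ 1) : HasDerivAt (fun t => (1 - t)⁻¹) ((1 - t) ^ 2)⁻¹ t := by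
    simpa using hasDerivAt_inv_one_sub_pow 1 ht
  have hf' {t : ℝ} (ht : t ≠ 1) :
      HasDerivAt (fun t => ((1 - t) ^ 2)⁻¹) (2 * ((1 - t) ^ 3)⁻¹) t := by
    simpa using hasDerivAt_inv_one_sub_pow 2 ht
  refine ⟨fun x hx => ?_, fun R hR0 hR1 x hx => ?_⟩
  · have hs : nsq x ≠ 1 := hx.ne
    rw [hypLap, hφ, lapF_mul_comp_nsq i ((eventually_ne_nhds hs).mono fun t => hf) (hf' hs),
      sum_mul_pd_mul_comp_nsq i (hf hs)]
    have : 1 - nsq x ≠ 0 := sub_ne_zero.mpr hs.symm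
    field_simp
    ring
  · have hs : nsq x ≠ 1 := by nlinarith
    rw [hypNormalDeriv, hφ]
    simp only [div_mul_eq_mul_div, ← Finset.sum_div]
    rw [sum_mul_pd_mul_comp_nsq i (hf hs), hx]
    have : 1 - R ^ 2 ≠ 0 := by nlinarith
    field_simp
    ring

/-- for each `i`, `φ₁ⁱ(x) = xᵢ/(1-|x|²)` satisfies
`Δ_H φ₁ⁱ - n φ₁ⁱ = 0` in the unit ball and the Steklov condition
`∂_{ν_H} φ₁ⁱ = ((1+R²)/(2R)) φ₁ⁱ` on every sphere `∂B_R`, `0 < R < 1`. -/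
theorem stmt_11 (n : ℕ) (hn : 2 ≤ n) (i : Fin n)
    (φ₁ : (Fin n → ℝ) → ℝ) (hφ₁ : φ₁ = fun x => x i / (1 - nsq x)) :
    (∀ x : Fin n → ℝ, nsq x < 1 → hypLap n φ₁ x - (n : ℝ) * φ₁ x = 0) ∧
    (∀ R : ℝ, 0 < R → R < 1 → ∀ x : Fin n → ℝ, nsq x = R ^ 2 →
      hypNormalDeriv n R φ₁ x = ((1 + R ^ 2) / (2 * R)) * φ₁ x) :=
  stmt_11_general n i φ₁ hφ₁
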